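/- Let G be an irreducible subgroup of PL_o([a,c]), where a < c. If χ : G → ℝ is a non-zero character that does not vanish identically on ker σ_ℓ and does not vanish identically on ker σ_r, then [χ] ∈ Σ¹(G). (Equivalently, S(G, ker χ_ℓ)^c ∩ S(G, ker χ_r)^c ⊆ Σ¹(G).) -/

import Mathlib

open Set

/-- A map `g : ℝ → ℝ` is *finitary piecewise linear* if there is a finite set of
breakpoints outside of which `g` is locally affine. -/
def IsFinitaryPL (g : ℝ → ℝ) : Prop :=
  ∃ B : Finset ℝ, ∀ t : ℝ, t ∉ B →
    ∃ m b : ℝ, ∃ ε : ℝ, 0 < ε ∧ ∀ u : ℝ, |u - t| < ε → g u = m * u + b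

/-- The support of a map of the real line. -/
def suppOf (g : ℝ → ℝ) : Set ℝ := {t : ℝ | g t ≠ t}

/-- `PLo I` is the set of orientation-preserving (i.e. strictly increasing) finitary
piecewise linear homeomorphisms of `ℝ` with support contained in `I`. -/
def PLo (I : Set ℝ) : Set (Equiv.Perm ℝ) :=
  {g : Equiv.Perm ℝ | StrictMono ⇑g ∧ IsFinitaryPL ⇑g ∧ suppOf ⇑g ⊆ I}

/-- The right derivative of `g` at `a`. -/
noncomputable def rightSlope (g : ℝ → ℝ) (a : ℝ) : ℝ := derivWithin g (Ici a) a

/-- The left derivative of `g` at `c`. -/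
noncomputable def leftSlope (g : ℝ → ℝ) (c : ℝ) : ℝ := derivWithin g (Iic c) c

/-- The amplitude of the translation with which `g` coincides near `+∞`. -/
noncomputable def amplTop (g : ℝ → ℝ) : ℝ :=
  Filter.limUnder Filter.atTop (fun t => g t - t)

/-- The amplitude of the translation with which `g` coincides near `-∞`. -/
noncomputable def amplBot (g : ℝ → ℝ) : ℝ :=
  Filter.limUnder Filter.atBot (fun t => g t - t)

/-- A character of a group is a homomorphism into `(ℝ, +)`. -/
def IsChar {Γ : Type*} [Group Γ] (χ : Γ → ℝ) : Prop :=
  ∀ g h : Γ, χ (g * h) = χ g + χ h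

/-- Two characters lie on the same ray: `ψ` is a positive multiple of `χ`. -/
def SameRayChar {Γ : Type*} (χ ψ : Γ → ℝ) : Prop :=
  ∃ r : ℝ, 0 < r ∧ ∀ g : Γ, ψ g = r * χ g

/-- The subgraph `Γ(G, X)_χ` of the Cayley graph of `G` with respect to the generating
set `X`, spanned by the vertices `g` with `χ g ≥ 0`, is connected. -/
def CayleyConnected {Γ : Type*} [Group Γ] (X : Set Γ) (χ : Γ → ℝ) : Prop :=
  ∀ g h : Γ, 0 ≤ χ g → 0 ≤ χ h →
    Relation.ReflTransGen
      (fun u v : Γ => 0 ≤ χ u ∧ 0 ≤ χ v ∧ ∃ x ∈ X, v = u * x ∨ u = v * x) g h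

/-- `[χ] ∈ Σ¹(G)`: for every generating set `X` of `G` the subgraph `Γ(G,X)_χ`
of the Cayley graph is connected. -/
def MemSigma1 {Γ : Type*} [Group Γ] (χ : Γ → ℝ) : Prop :=
  ∀ X : Set Γ, Subgroup.closure X = ⊤ → CayleyConnected X χ

/-- The character `χ_ℓ = ln ∘ σ_ℓ` of a subgroup `G` of `PL_o([a,c])`. -/
noncomputable def chiL (G : Subgroup (Equiv.Perm ℝ)) (a : ℝ) : G → ℝ :=
  fun g => Real.log (rightSlope (⇑(g : Equiv.Perm ℝ)) a)

/-- The character `χ_r = ln ∘ σ_r` of a subgroup `G` of `PL_o([a,c])`. -/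
noncomputable def chiR (G : Subgroup (Equiv.Perm ℝ)) (c : ℝ) : G → ℝ :=
  fun g => Real.log (leftSlope (⇑(g : Equiv.Perm ℝ)) c)

open Filter Topology

/-!
`JoinedAbove X χ r g h` says that a path of the Cayley graph `Γ(G,X)` inside `χ ≥ r` joins
`g` to `h`; for the generating set `X`, `[χ] ∈ Σ¹(G)` asks for `JoinedAbove X χ 0 1 g` whenever
`χ g ≥ 0`. Left translation by `k` shifts the level by `χ k`, and every `g` is joined to `1` at
some level; hence if `z` is joined to `1` at level `0` and `χ z > 0`, so is `z ^ n * g` for large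
`n`. Cancelling `z ^ n` again shows that `g` is joined to `1` at level `0` as soon as `χ g ≥ 0`
and `g` commutes with `z`, or `g` conjugates such a `z` into another one.

In `G`, slope `1` at `a` (resp. `c`) forces an element to be the identity near `a` (resp. `c`),
so the hypotheses provide `u` trivial near `a` and `v` trivial near `c`, both with `χ > 0`. By
irreducibility a conjugate of `v` has support arbitrarily close to `a`, hence commutes with any
two given elements trivial near `a`; this links every element trivial near `a` with `χ ≥ 0` to
the seed `k ^ n * u * (k ^ n)⁻¹`, where `k ∈ X ∪ X⁻¹` has `χ k > 0`. Finally every `g` with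
`χ g ≥ 0` conjugates `u` into an element trivial near `a`.
-/

namespace IsChar

variable {Γ : Type*} [Group Γ] {χ : Γ → ℝ}

theorem map_one (hχ : IsChar χ) : χ 1 = 0 := by
  simpa using hχ 1 1

theorem map_inv (hχ : IsChar χ) (g : Γ) : χ g⁻¹ = -χ g := by
  have := hχ g g⁻¹
  rw [mul_inv_cancel, hχ.map_one] at this
  linarith

theorem map_pow (hχ : IsChar χ) (g : Γ) (n : ℕ) : χ (g ^ n) = n * χ g := by
  induction n with
  | zero => simp [hχ.map_one]
  | succ n ih => rw [pow_succ, hχ, ih]; push_cast; ring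

theorem map_conj (hχ : IsChar χ) (k g : Γ) : χ (k * g * k⁻¹) = χ g := by
  rw [hχ, hχ, hχ.map_inv]; ring

theorem exists_pos (hχ : IsChar χ) {P : Γ → Prop} (hP : ∀ g, P g → P g⁻¹)
    (h : ∃ g, P g ∧ χ g ≠ 0) : ∃ g, P g ∧ 0 < χ g := by
  obtain ⟨g, hg, hg0⟩ := h
  rcases hg0.lt_or_gt with hneg | hpos
  · exact ⟨g⁻¹, hP g hg, by rw [hχ.map_inv]; linarith⟩
  · exact ⟨g, hg, hpos⟩

end IsChar

section CayleyGraph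

variable {Γ : Type*} [Group Γ] {X : Set Γ} {χ : Γ → ℝ} {r s : ℝ} {g h k : Γ}

def CayleyAdjAbove (X : Set Γ) (χ : Γ → ℝ) (r : ℝ) (u v : Γ) : Prop :=
  r ≤ χ u ∧ r ≤ χ v ∧ ∃ x ∈ X, v = u * x ∨ u = v * x

def JoinedAbove (X : Set Γ) (χ : Γ → ℝ) (r : ℝ) : Γ → Γ → Prop :=
  Relation.ReflTransGen (CayleyAdjAbove X χ r)

namespace JoinedAbove

theorem symm (hgh : JoinedAbove X χ r g h) : JoinedAbove X χ r h g := by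
  induction hgh with
  | refl => exact .refl
  | tail _ huv ih =>
    obtain ⟨hu, hv, x, hx, hxuv⟩ := huv
    exact Relation.ReflTransGen.head ⟨hv, hu, x, hx, hxuv.symm⟩ ih

theorem trans (hgh : JoinedAbove X χ r g h) (hhk : JoinedAbove X χ r h k) :
    JoinedAbove X χ r g k :=
  Relation.ReflTransGen.trans hgh hhk

theorem mono (hgh : JoinedAbove X χ r g h) (hsr : s ≤ r) : JoinedAbove X χ s g h :=
  Relation.ReflTransGen.mono (fun _ _ ⟨hu, hv, huv⟩ => ⟨hsr.trans hu, hsr.trans hv, huv⟩) _ _ hgh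

theorem mul_left (hχ : IsChar χ) (hgh : JoinedAbove X χ r g h) (k : Γ) :
    JoinedAbove X χ (χ k + r) (k * g) (k * h) :=
  Relation.ReflTransGen.lift (k * ·) (fun u v ⟨hu, hv, x, hx, huv⟩ => by
    refine ⟨?_, ?_, x, hx, ?_⟩
    · simp only [hχ k u]; linarith
    · simp only [hχ k v]; linarith
    · rcases huv with rfl | rfl <;> simp [mul_assoc]) _ _ hgh

theorem le_right (hgh : JoinedAbove X χ r g h) (hg : r ≤ χ g) : r ≤ χ h := by
  rcases Relation.ReflTransGen.cases_tail hgh with rfl | ⟨_, _, -, hh, -⟩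
  exacts [hg, hh]

theorem inv (hχ : IsChar χ) (hg : JoinedAbove X χ r 1 g) : JoinedAbove X χ (r - χ g) 1 g⁻¹ := by
  have := hg.mul_left hχ g⁻¹
  rw [mul_one, inv_mul_cancel, hχ.map_inv, neg_add_eq_sub] at this
  exact this.symm

end JoinedAbove

theorem exists_joinedAbove (hχ : IsChar χ) (hX : Subgroup.closure X = ⊤) (g : Γ) :
    ∃ r, JoinedAbove X χ r 1 g := by
  induction (hX ▸ Subgroup.mem_top g : g ∈ Subgroup.closure X) using
    Subgroup.closure_induction with
  | mem x hx =>
    exact ⟨min 0 (χ x), .single ⟨by simp [hχ.map_one], min_le_right _ _, x, hx, by simp⟩⟩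
  | one => exact ⟨0, .refl⟩
  | mul x y _ _ hx hy =>
    obtain ⟨r, hr⟩ := hx
    obtain ⟨s, hs⟩ := hy
    have hxy := hs.mul_left hχ x
    rw [mul_one] at hxy
    exact ⟨min r (χ x + s), (hr.mono (min_le_left _ _)).trans (hxy.mono (min_le_right _ _))⟩
  | inv x _ hx =>
    obtain ⟨r, hr⟩ := hx
    exact ⟨_, hr.inv hχ⟩

namespace JoinedAbove

theorem nonneg (hχ : IsChar χ) (hg : JoinedAbove X χ 0 1 g) : 0 ≤ χ g :=
  hg.le_right (hχ.map_one.ge)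

theorem mul (hχ : IsChar χ) (hg : JoinedAbove X χ 0 1 g) (hh : JoinedAbove X χ r 1 h)
    (hr : -r ≤ χ g) : JoinedAbove X χ 0 1 (g * h) := by
  have := hh.mul_left hχ g
  rw [mul_one] at this
  exact hg.trans (this.mono (by linarith))

theorem of_mul (hχ : IsChar χ) (hgh : JoinedAbove X χ 0 1 (g * h)) (hh : JoinedAbove X χ 0 1 h)
    (hg : 0 ≤ χ g) : JoinedAbove X χ 0 1 g := by
  have := hh.mul_left hχ g
  rw [mul_one, add_zero] at this
  exact hgh.trans (this.mono hg).symm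

theorem pow (hχ : IsChar χ) (hg : JoinedAbove X χ 0 1 g) (n : ℕ) : JoinedAbove X χ 0 1 (g ^ n) := by
  induction n with
  | zero => rw [pow_zero]; exact .refl
  | succ n ih => rw [pow_succ]; exact ih.mul hχ hg (by simpa using ih.nonneg hχ)

theorem exists_pow_mul (hχ : IsChar χ) (hX : Subgroup.closure X = ⊤)
    (hk : JoinedAbove X χ 0 1 k) (hk0 : 0 < χ k) (g : Γ) :
    ∃ n : ℕ, JoinedAbove X χ 0 1 (k ^ n * g) := by
  obtain ⟨r, hr⟩ := exists_joinedAbove hχ hX g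
  obtain ⟨n, hn⟩ := Archimedean.arch (-r) hk0
  refine ⟨n, (hk.pow hχ n).mul hχ hr ?_⟩
  rwa [hχ.map_pow, ← nsmul_eq_mul]

theorem of_commute (hχ : IsChar χ) (hX : Subgroup.closure X = ⊤)
    (hk : JoinedAbove X χ 0 1 k) (hk0 : 0 < χ k) (hkg : Commute k g) (hg : 0 ≤ χ g) :
    JoinedAbove X χ 0 1 g := by
  obtain ⟨n, hn⟩ := hk.exists_pow_mul hχ hX hk0 g
  rw [(hkg.pow_left n).eq] at hn
  exact hn.of_mul hχ (hk.pow hχ n) hg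

theorem of_conj (hχ : IsChar χ) (hX : Subgroup.closure X = ⊤)
    (hk : JoinedAbove X χ 0 1 k) (hk0 : 0 < χ k) (hgk : JoinedAbove X χ 0 1 (g * k * g⁻¹))
    (hg : 0 ≤ χ g) : JoinedAbove X χ 0 1 g := by
  obtain ⟨n, hn⟩ := hgk.exists_pow_mul hχ hX (by rwa [hχ.map_conj]) g
  rw [conj_pow, inv_mul_cancel_right] at hn
  exact hn.of_mul hχ (hk.pow hχ n) hg

theorem exists_conj_pow (hχ : IsChar χ) (hX : Subgroup.closure X = ⊤)
    (hk : JoinedAbove X χ 0 1 k) (hk0 : 0 < χ k) (hg : 0 ≤ χ g) :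
    ∃ n : ℕ, JoinedAbove X χ 0 1 (k ^ n * g * (k ^ n)⁻¹) := by
  obtain ⟨n, hn⟩ := hk.exists_pow_mul hχ hX hk0 g
  refine ⟨n, hn.mul hχ ((hk.pow hχ n).inv hχ) ?_⟩
  rw [hχ]; linarith

end JoinedAbove

theorem exists_joinedAbove_pos (hχ : IsChar χ) (hX : Subgroup.closure X = ⊤) (hne : χ ≠ 0) :
    ∃ k, JoinedAbove X χ 0 1 k ∧ 0 < χ k := by
  have hletter : ∃ x, (x ∈ X ∨ x⁻¹ ∈ X) ∧ χ x ≠ 0 := by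
    by_contra! hX0
    refine hne (funext fun g => ?_)
    induction (hX ▸ Subgroup.mem_top g : g ∈ Subgroup.closure X) using
      Subgroup.closure_induction with
    | mem x hx => exact hX0 x (.inl hx)
    | one => exact hχ.map_one
    | mul x y _ _ hx hy => simp [hχ x y, hx, hy]
    | inv x _ hx => simp [hχ.map_inv, hx]
  obtain ⟨k, hkX, hk0⟩ := hχ.exists_pos (fun x hx => hx.symm.imp_right (by simp)) hletter
  refine ⟨k, .single ⟨hχ.map_one.ge, hk0.le, ?_⟩, hk0⟩
  rcases hkX with hkX | hkX
  exacts [⟨k, hkX, .inl (one_mul k).symm⟩, ⟨k⁻¹, hkX, .inr (mul_inv_cancel k).symm⟩]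

theorem cayleyConnected_of_joinedAbove (h : ∀ g, 0 ≤ χ g → JoinedAbove X χ 0 1 g) :
    CayleyConnected X χ :=
  fun g k hg hk => (h g hg).symm.trans (h k hk)

end CayleyGraph

theorem exists_eqOn_affine_of_locally_affine {f : ℝ → ℝ} {s : Set ℝ} (hs : IsOpen s)
    (hs' : IsPreconnected s) (hf : ∀ x ∈ s, ∃ m b : ℝ, ∀ᶠ y in 𝓝 x, f y = m * y + b) :
    ∃ m b : ℝ, EqOn f (fun y => m * y + b) s := by
  rcases s.eq_empty_or_nonempty with rfl | ⟨x₀, hx₀⟩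
  · exact ⟨0, 0, eqOn_empty _ _⟩
  have haffine : ∀ m b y : ℝ, HasDerivAt (fun y => m * y + b) m y := fun m b y => by
    simpa using ((hasDerivAt_id y).const_mul m).add_const b
  have hderiv : ∀ x ∈ s, ∃ m, HasDerivAt f m x ∧ deriv f =ᶠ[𝓝 x] fun _ => m := by
    intro x hx
    obtain ⟨m, b, h⟩ := hf x hx
    refine ⟨m, (haffine m b x).congr_of_eventuallyEq h, ?_⟩
    filter_upwards [h.eventually_nhds] with y hy
    exact ((haffine m b y).congr_of_eventuallyEq hy).deriv
  have hf_diff : DifferentiableOn ℝ f s := fun x hx =>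
    let ⟨_, h, _⟩ := hderiv x hx; h.differentiableAt.differentiableWithinAt
  have hf'_const : ∀ x ∈ s, deriv f x = deriv f x₀ := by
    refine fun x hx => hs.is_const_of_deriv_eq_zero hs' (fun y hy => ?_) (fun y hy => ?_) hx hx₀
    · obtain ⟨m, -, h⟩ := hderiv y hy
      exact ((hasDerivAt_const y m).congr_of_eventuallyEq h).differentiableAt.differentiableWithinAt
    · obtain ⟨m, -, h⟩ := hderiv y hy
      exact ((hasDerivAt_const y m).congr_of_eventuallyEq h).deriv
  obtain ⟨b, hb⟩ := hs.exists_eq_add_of_deriv_eq hs' hf_diff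
    (fun y _ => (haffine (deriv f x₀) 0 y).differentiableAt.differentiableWithinAt)
    (fun y hy => by rw [hf'_const y hy, (haffine _ 0 y).deriv])
  exact ⟨deriv f x₀, b, fun y hy => by simpa using hb hy⟩

theorem IsFinitaryPL.exists_affine_near {g : ℝ → ℝ} (hg : IsFinitaryPL g) (x : ℝ) :
    ∃ l u, x ∈ Ioo l u ∧ (∃ m b : ℝ, EqOn g (fun t => m * t + b) (Ioo l x)) ∧
      ∃ m b : ℝ, EqOn g (fun t => m * t + b) (Ioo x u) := by
  obtain ⟨B, hB⟩ := hg
  obtain ⟨l, u, hx, hlu⟩ :=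
    mem_nhds_iff_exists_Ioo_subset.1
      ((B.erase x).isClosed.compl_mem_nhds (Finset.notMem_erase x B))
  have hloc : ∀ t ∈ Ioo l u, t ≠ x → ∃ m b : ℝ, ∀ᶠ s in 𝓝 t, g s = m * s + b := by
    intro t ht htx
    obtain ⟨m, b, ε, hε, h⟩ := hB t fun htB => hlu ht (Finset.mem_erase.2 ⟨htx, htB⟩)
    exact ⟨m, b, Metric.eventually_nhds_iff.2 ⟨ε, hε, fun s hs => h s (Real.dist_eq s t ▸ hs)⟩⟩
  exact ⟨l, u, hx,
    exists_eqOn_affine_of_locally_affine isOpen_Ioo isPreconnected_Ioo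
      fun t ht => hloc t ⟨ht.1, ht.2.trans hx.2⟩ ht.2.ne,
    exists_eqOn_affine_of_locally_affine isOpen_Ioo isPreconnected_Ioo
      fun t ht => hloc t ⟨hx.1.trans ht.1, ht.2⟩ ht.1.ne'⟩

theorem eqOn_id_of_derivWithin_eq_one {g : ℝ → ℝ} {J S : Set ℝ} {x m b : ℝ} (hJ : J ∈ 𝓝[S] x)
    (hS : UniqueDiffWithinAt ℝ S x) (hxJ : x ∈ J) (hgx : g x = x)
    (hg : EqOn g (fun t => m * t + b) J) (h1 : derivWithin g S x = 1) : EqOn g id J := by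
  have hm : derivWithin g S x = m := by
    rw [(eventuallyEq_of_mem hJ hg).derivWithin_eq (hg hxJ)]
    simpa using (((hasDerivAt_id x).const_mul m).add_const b).hasDerivWithinAt.derivWithin hS
  obtain rfl : m = 1 := hm.symm.trans h1
  have hb : b = 0 := by linarith [hg hxJ]
  intro t ht
  simp [hg ht, hb]

section PiecewiseLinear

variable {I : Set ℝ} {a c t : ℝ} {g : Equiv.Perm ℝ}

theorem continuous_of_mem_PLo (hg : g ∈ PLo I) : Continuous g :=
  hg.1.monotone.continuous_of_surjective g.surjective

theorem apply_eq_self_of_mem_PLo (hg : g ∈ PLo I) (ht : t ∉ I) : g t = t :=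
  not_not.1 fun h => ht (hg.2.2 h)

theorem apply_eq_self_of_mem_PLo_of_mem_closure (hg : g ∈ PLo I) (ht : t ∈ closure Iᶜ) :
    g t = t :=
  (isClosed_eq (continuous_of_mem_PLo hg) continuous_id).closure_subset_iff.2
    (fun _ => apply_eq_self_of_mem_PLo hg) ht

theorem apply_left_eq_of_mem_PLo (hg : g ∈ PLo (Icc a c)) : g a = a := by
  have hIio : Iio a ⊆ (Icc a c)ᶜ := fun t ht h => (ht.trans_le h.1).false
  refine apply_eq_self_of_mem_PLo_of_mem_closure hg (closure_mono hIio ?_)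
  rw [closure_Iio a]; exact self_mem_Iic

theorem apply_right_eq_of_mem_PLo (hg : g ∈ PLo (Icc a c)) : g c = c := by
  have hIoi : Ioi c ⊆ (Icc a c)ᶜ := fun t ht h => (ht.trans_le h.2).false
  refine apply_eq_self_of_mem_PLo_of_mem_closure hg (closure_mono hIoi ?_)
  rw [closure_Ioi c]; exact self_mem_Ici

theorem lt_apply_of_mem_PLo (hg : g ∈ PLo (Icc a c)) (ht : a < t) : a < g t :=
  apply_left_eq_of_mem_PLo hg ▸ hg.1 ht

theorem exists_fixes_Iic_of_rightSlope_eq_one (hg : g ∈ PLo (Icc a c)) (hac : a < c)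
    (h1 : rightSlope g a = 1) : ∃ α ∈ Ioo a c, ∀ t ≤ α, g t = t := by
  obtain ⟨-, u, ⟨-, hau⟩, -, m, b, hmb⟩ := hg.2.1.exists_affine_near a
  have hid : EqOn g id (Icc a u) :=
    eqOn_id_of_derivWithin_eq_one (Icc_mem_nhdsGE hau) (uniqueDiffWithinAt_Ici a)
      (left_mem_Icc.2 hau.le) (apply_left_eq_of_mem_PLo hg)
      (hmb.of_subset_closure (continuous_of_mem_PLo hg).continuousOn (by fun_prop)
        Ioo_subset_Icc_self (closure_Ioo hau.ne).ge) h1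
  have hauc : a < min u c := lt_min hau hac
  refine ⟨(a + min u c) / 2, ⟨by linarith, by linarith [min_le_right u c]⟩, fun t ht => ?_⟩
  rcases lt_or_ge t a with hta | hat
  · exact apply_eq_self_of_mem_PLo hg fun h => (hta.trans_le h.1).false
  · exact hid ⟨hat, by linarith [min_le_left u c]⟩

theorem exists_fixes_Ici_of_leftSlope_eq_one (hg : g ∈ PLo (Icc a c)) (hac : a < c)
    (h1 : leftSlope g c = 1) : ∃ γ ∈ Ioo a c, ∀ t, γ ≤ t → g t = t := by
  obtain ⟨l, -, ⟨hlc, -⟩, ⟨m, b, hmb⟩, -⟩ := hg.2.1.exists_affine_near c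
  have hid : EqOn g id (Icc l c) :=
    eqOn_id_of_derivWithin_eq_one (Icc_mem_nhdsLE hlc) (uniqueDiffWithinAt_Iic c)
      (right_mem_Icc.2 hlc.le) (apply_right_eq_of_mem_PLo hg)
      (hmb.of_subset_closure (continuous_of_mem_PLo hg).continuousOn (by fun_prop)
        Ioo_subset_Icc_self (closure_Ioo hlc.ne).ge) h1
  have hlac : max l a < c := max_lt hlc hac
  refine ⟨(max l a + c) / 2, ⟨by linarith [le_max_right l a], by linarith⟩, fun t ht => ?_⟩
  rcases lt_or_ge c t with hct | htc
  · exact apply_eq_self_of_mem_PLo hg fun h => (hct.trans_le h.2).false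
  · exact hid ⟨by linarith [le_max_left l a], htc⟩

end PiecewiseLinear

section Conjugation

variable {h w b : Equiv.Perm ℝ} {α β γ t : ℝ}

theorem conj_apply_eq_self_of_le (hh : StrictMono h) (hw : ∀ t ≤ α, w t = t) (ht : t ≤ h α) :
    (h * w * h⁻¹) t = t := by
  have : h.symm t ≤ α := by rwa [← hh.le_iff_le, Equiv.apply_symm_apply]
  simp [Equiv.Perm.mul_apply, hw _ this]

theorem conj_apply_eq_self_of_ge (hh : StrictMono h) (hw : ∀ t, α ≤ t → w t = t) (ht : h α ≤ t) :
    (h * w * h⁻¹) t = t := by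
  have : α ≤ h.symm t := by rwa [← hh.le_iff_le, Equiv.apply_symm_apply]
  simp [Equiv.Perm.mul_apply, hw _ this]

theorem commute_of_fixes_Iic_of_fixes_Ici (hw : ∀ t ≤ β, w t = t) (hb : ∀ t, γ ≤ t → b t = t)
    (hγβ : γ ≤ β) : Commute w b :=
  Equiv.Perm.Disjoint.commute fun t => (le_total t β).imp (hw t) fun ht => hb t (hγβ.trans ht)

end Conjugation

section Irreducible

variable {a c : ℝ} {G : Subgroup (Equiv.Perm ℝ)}

theorem exists_apply_lt_of_irreducible (hG : (G : Set (Equiv.Perm ℝ)) ⊆ PLo (Icc a c))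
    (hirr : ∀ t : ℝ, a < t → t < c → ∃ g ∈ G, g t ≠ t) {s y : ℝ} (hs : s < c) (hy : a < y) :
    ∃ h ∈ G, h s < y := by
  by_contra! hO
  set O := range fun k : G => (k : Equiv.Perm ℝ) s
  have hne : O.Nonempty := range_nonempty _
  have hyO : y ∈ lowerBounds O := by rintro _ ⟨k, rfl⟩; exact hO k k.2
  have hyι : y ≤ sInf O := le_csInf hne hyO
  have hιs : sInf O ≤ s := csInf_le ⟨y, hyO⟩ ⟨1, rfl⟩
  obtain ⟨g, hgG, hg⟩ := hirr (sInf O) (hy.trans_le hyι) (hιs.trans_lt hs)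
  have himage : g '' O = O := by
    rw [← range_comp]
    exact (mul_left_surjective (⟨g, hgG⟩ : G)).range_comp fun k : G => (k : Equiv.Perm ℝ) s
  refine hg ?_
  rw [(hG hgG).1.monotone.map_csInf_of_continuousAt
    (continuous_of_mem_PLo (hG hgG)).continuousAt hne ⟨y, hyO⟩, himage]

variable {X : Set G} {χ : G → ℝ}

theorem joinedAbove_of_fixes_Iic (hG : (G : Set (Equiv.Perm ℝ)) ⊆ PLo (Icc a c))
    (hirr : ∀ t : ℝ, a < t → t < c → ∃ g ∈ G, g t ≠ t) (hχ : IsChar χ)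
    (hX : Subgroup.closure X = ⊤)
    (hv : ∃ v : G, (∃ γ ∈ Ioo a c, ∀ t, γ ≤ t → (v : Equiv.Perm ℝ) t = t) ∧ 0 < χ v)
    {w₀ w : G} {α β : ℝ} (hw₀ : JoinedAbove X χ 0 1 w₀) (hw₀0 : 0 < χ w₀) (hα : a < α)
    (hw₀α : ∀ t ≤ α, (w₀ : Equiv.Perm ℝ) t = t) (hw : 0 ≤ χ w) (hβ : a < β)
    (hwβ : ∀ t ≤ β, (w : Equiv.Perm ℝ) t = t) : JoinedAbove X χ 0 1 w := by
  obtain ⟨v, ⟨γ, hγ, hvγ⟩, hv0⟩ := hv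
  obtain ⟨h, hhG, hhγ⟩ := exists_apply_lt_of_irreducible hG hirr hγ.2 (lt_min hα hβ)
  set b : G := ⟨h, hhG⟩ * v * ⟨h, hhG⟩⁻¹
  have hb0 : 0 < χ b := by rwa [hχ.map_conj]
  have hbγ : ∀ t, h γ ≤ t → (b : Equiv.Perm ℝ) t = t :=
    fun _ => conj_apply_eq_self_of_ge (hG hhG).1 hvγ
  have hcomm : ∀ {u : G} {δ : ℝ}, h γ ≤ δ → (∀ t ≤ δ, (u : Equiv.Perm ℝ) t = t) → Commute u b :=
    fun hδ hu => Subtype.ext (commute_of_fixes_Iic_of_fixes_Ici hu hbγ hδ).eq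
  have hb := hw₀.of_commute hχ hX hw₀0 (hcomm (hhγ.le.trans (min_le_left _ _)) hw₀α) hb0.le
  exact hb.of_commute hχ hX hb0 (hcomm (hhγ.le.trans (min_le_right _ _)) hwβ).symm hw

end Irreducible

/-- **Addendum (Statement 13).** Let `G ≤ PL_o([a,c])` be irreducible. If the
non-zero character `χ` of `G` vanishes identically neither on `ker σ_ℓ` nor on
`ker σ_r`, then `[χ] ∈ Σ¹(G)`. -/
theorem memSigma1_of_not_vanishing_on_kernels
    (a c : ℝ) (hac : a < c)
    (G : Subgroup (Equiv.Perm ℝ)) (hG : (G : Set (Equiv.Perm ℝ)) ⊆ PLo (Icc a c))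
    (hirr : ∀ t : ℝ, a < t → t < c → ∃ g ∈ G, g t ≠ t)
    (χ : G → ℝ) (hχ : IsChar χ) (hne : χ ≠ 0)
    (hL : ∃ g : G, rightSlope (⇑(g : Equiv.Perm ℝ)) a = 1 ∧ χ g ≠ 0)
    (hR : ∃ g : G, leftSlope (⇑(g : Equiv.Perm ℝ)) c = 1 ∧ χ g ≠ 0) :
    MemSigma1 χ := by
  intro X hX
  obtain ⟨u, ⟨α, hα, huα⟩, hu0⟩ := hχ.exists_pos
    (P := fun u : G => ∃ α ∈ Ioo a c, ∀ t ≤ α, (u : Equiv.Perm ℝ) t = t)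
    (fun _ ⟨α, hα, h⟩ => ⟨α, hα, fun t ht => Equiv.Perm.inv_eq_iff_eq.2 (h t ht).symm⟩)
    (hL.imp fun g hg => ⟨exists_fixes_Iic_of_rightSlope_eq_one (hG g.2) hac hg.1, hg.2⟩)
  have hv := hχ.exists_pos
    (P := fun v : G => ∃ γ ∈ Ioo a c, ∀ t, γ ≤ t → (v : Equiv.Perm ℝ) t = t)
    (fun _ ⟨γ, hγ, h⟩ => ⟨γ, hγ, fun t ht => Equiv.Perm.inv_eq_iff_eq.2 (h t ht).symm⟩)
    (hR.imp fun g hg => ⟨exists_fixes_Ici_of_leftSlope_eq_one (hG g.2) hac hg.1, hg.2⟩)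
  obtain ⟨k, hk, hk0⟩ := exists_joinedAbove_pos hχ hX hne
  obtain ⟨n, hseed⟩ := hk.exists_conj_pow hχ hX hk0 hu0.le
  have hgood : ∀ w : G, 0 ≤ χ w → ∀ β, a < β → (∀ t ≤ β, (w : Equiv.Perm ℝ) t = t) →
      JoinedAbove X χ 0 1 w := fun w hw β hβ hwβ =>
    joinedAbove_of_fixes_Iic hG hirr hχ hX hv hseed (by rwa [hχ.map_conj])
      (lt_apply_of_mem_PLo (hG (k ^ n).2) hα.1)
      (fun t => conj_apply_eq_self_of_le (hG (k ^ n).2).1 huα) hw hβ hwβ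
  refine cayleyConnected_of_joinedAbove fun g hg => ?_
  exact (hgood u hu0.le α hα.1 huα).of_conj hχ hX hu0
    (hgood (g * u * g⁻¹) (hχ.map_conj g u ▸ hu0.le) _ (lt_apply_of_mem_PLo (hG g.2) hα.1)
      (fun t => conj_apply_eq_self_of_le (hG g.2).1 huα)) hg
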